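/- With M^k_r as above, the cardinality of M^k_r is 2^{k−r} · S(k,r), where S(k,r) is the Stirling number of the second kind. -/

import Mathlib

/-!
A matrix in `M^k_r` is determined by its row-index function `f : Fin k → Fin r` (column `j` has
its nonzero entry in row `f j`) and the signs `s : Fin k → ℤˣ` of its entries. The row
conditions say exactly that `f` is a restricted growth function onto `Fin r` (every value below
`f j` already occurs before `j`) and that `s = 1` at the first occurrence of each value; the
remaining `k - r` signs are free. Restricted growth functions onto `Fin r` encode the partitions
of a `k`-set into `r` blocks, and deleting the last column gives Stirling's recursion: the last
element either joins one of the `r + 1` blocks of the others (`Fin.init f` is still onto) or is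
a new singleton block, necessarily the last one.
-/

/-- Membership in the class `M^k_r`. -/
def MkrMem {r k : ℕ} (D : Matrix (Fin r) (Fin k) ℤ) : Prop :=
  (∀ j : Fin k, ∃ i : Fin r, (D i j = 1 ∨ D i j = -1) ∧ ∀ i' : Fin r, i' ≠ i → D i' j = 0) ∧
  (∀ i : Fin r, ∃ j : Fin k, D i j ≠ 0) ∧
  (∃ js : Fin r → Fin k, StrictMono js ∧ (∀ i : Fin r, (i : ℕ) = 0 → (js i : ℕ) = 0) ∧
    ∀ i : Fin r, D i (js i) = 1 ∧ ∀ j : Fin k, j < js i → D i j = 0)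

/-- Stirling numbers of the second kind. -/
def Stir : ℕ → ℕ → ℕ
  | 0, 0 => 1
  | 0, _ + 1 => 0
  | _ + 1, 0 => 0
  | k + 1, r + 1 => (r + 1) * Stir k (r + 1) + Stir k r

open Function

variable {k r : ℕ}

def IsFirstOccurrence {ι α : Type*} [LT ι] (f : ι → α) (j : ι) : Prop :=
  ∀ j' < j, f j' ≠ f j

def IsRestrictedGrowth (f : Fin k → Fin r) : Prop :=
  Surjective f ∧ ∀ j, ∀ i < f j, ∃ j' < j, f j' = i

abbrev RestrictedGrowth (k r : ℕ) : Type := {f : Fin k → Fin r // IsRestrictedGrowth f}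

abbrev SignChoice (f : Fin k → Fin r) : Type :=
  {s : Fin k → ℤˣ // ∀ j, IsFirstOccurrence f j → s j = 1}

section FirstOccurrence

variable {ι α : Type*} [LinearOrder ι] {f : ι → α}

theorem exists_isFirstOccurrence [WellFoundedLT ι] (f : ι → α) (j : ι) :
    ∃ j₀, f j₀ = f j ∧ IsFirstOccurrence f j₀ := by
  obtain ⟨j₀, hj₀, hmin⟩ := wellFounded_lt.has_min {j' | f j' = f j} ⟨j, rfl⟩
  exact ⟨j₀, hj₀, fun j' hj' h => hmin j' (h.trans hj₀) hj'⟩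

theorem IsFirstOccurrence.eq_of_apply_eq {j₁ j₂ : ι} (h₁ : IsFirstOccurrence f j₁)
    (h₂ : IsFirstOccurrence f j₂) (h : f j₁ = f j₂) : j₁ = j₂ := by
  rcases lt_trichotomy j₁ j₂ with hlt | heq | hgt
  · exact absurd h (h₂ j₁ hlt)
  · exact heq
  · exact absurd h.symm (h₁ j₂ hgt)

theorem card_isFirstOccurrence [WellFoundedLT ι] (hf : Surjective f) :
    Nat.card {j // IsFirstOccurrence f j} = Nat.card α := by
  refine Nat.card_eq_of_bijective (fun j => f j.1) ⟨?_, ?_⟩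
  · rintro ⟨j₁, h₁⟩ ⟨j₂, h₂⟩ h
    exact Subtype.ext (h₁.eq_of_apply_eq h₂ h)
  · intro i
    obtain ⟨j, rfl⟩ := hf i
    obtain ⟨j₀, h, hj₀⟩ := exists_isFirstOccurrence f j
    exact ⟨⟨j₀, hj₀⟩, h⟩

end FirstOccurrence

theorem IsRestrictedGrowth.lt_of_isFirstOccurrence {f : Fin k → Fin r}
    (hf : IsRestrictedGrowth f) {j₁ j₂ : Fin k} (h₁ : IsFirstOccurrence f j₁)
    (h : f j₁ < f j₂) : j₁ < j₂ := by
  obtain ⟨j', hj', hfj'⟩ := hf.2 j₂ _ h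
  exact (not_lt.1 fun hlt => h₁ j' hlt hfj').trans_lt hj'

theorem IsRestrictedGrowth.apply_eq_of_val_eq_zero {f : Fin k → Fin r}
    (hf : IsRestrictedGrowth f) {j : Fin k} {i : Fin r} (hj : (j : ℕ) = 0) (hi : (i : ℕ) = 0) :
    f j = i := by
  by_contra hne
  obtain ⟨j', hj', -⟩ := hf.2 j i (Fin.lt_def.2 (by have := Fin.val_ne_of_ne hne; omega))
  exact absurd (Fin.lt_def.1 hj') (by omega)

theorem card_signChoice {f : Fin k → Fin r} (hf : Surjective f) :
    Nat.card (SignChoice f) = 2 ^ (k - r) := by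
  classical
  have hfactor : ∀ j, Nat.card {u : ℤˣ // IsFirstOccurrence f j → u = 1} =
      if IsFirstOccurrence f j then 1 else 2 := fun j => by
    split_ifs with hj <;> simp [hj, Fintype.card_units_int]
  have hfirst : (Finset.univ.filter (IsFirstOccurrence f)).card = r := by
    rw [← Fintype.card_subtype, ← Nat.card_eq_fintype_card, card_isFirstOccurrence hf,
      Nat.card_fin]
  rw [Nat.card_congr (Equiv.subtypePiEquivPi (β := fun _ : Fin k => ℤˣ)
      (p := fun j u => IsFirstOccurrence f j → u = 1)), Nat.card_pi,
    Finset.prod_congr rfl fun j _ => hfactor j, Finset.prod_ite, Finset.prod_const_one,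
    Finset.prod_const, one_mul]
  congr 1
  have := Finset.univ.card_filter_add_card_filter_not (IsFirstOccurrence f)
  rw [hfirst, Finset.card_univ, Fintype.card_fin] at this
  omega

def signedIncidence (f : Fin k → Fin r) (s : Fin k → ℤˣ) : Matrix (Fin r) (Fin k) ℤ :=
  Matrix.of fun i j => if f j = i then (s j : ℤ) else 0

theorem signedIncidence_apply (f : Fin k → Fin r) (s : Fin k → ℤˣ) (i : Fin r) (j : Fin k) :
    signedIncidence f s i j = if f j = i then (s j : ℤ) else 0 := rfl

theorem signedIncidence_ne_zero_iff {f : Fin k → Fin r} {s : Fin k → ℤˣ} {i : Fin r}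
    {j : Fin k} : signedIncidence f s i j ≠ 0 ↔ f j = i := by
  simp [signedIncidence_apply]

theorem signedIncidence_inj {f f' : Fin k → Fin r} {s s' : Fin k → ℤˣ} :
    signedIncidence f s = signedIncidence f' s' ↔ f = f' ∧ s = s' := by
  refine ⟨fun h => ?_, by rintro ⟨rfl, rfl⟩; rfl⟩
  have hcol : ∀ j, f' j = f j ∧ s j = s' j := fun j => by
    have hj := congrFun (congrFun h (f j)) j
    rw [signedIncidence_apply, signedIncidence_apply, if_pos rfl] at hj
    split_ifs at hj with hf'
    · exact ⟨hf', Units.ext hj⟩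
    · exact absurd hj (s j).ne_zero
  exact ⟨funext fun j => (hcol j).1.symm, funext fun j => (hcol j).2⟩

theorem exists_signedIncidence_eq {D : Matrix (Fin r) (Fin k) ℤ}
    (hD : ∀ j, ∃ i, (D i j = 1 ∨ D i j = -1) ∧ ∀ i' ≠ i, D i' j = 0) :
    ∃ f s, signedIncidence f s = D := by
  choose f hunit hzero using hD
  refine ⟨f, fun j => (Int.isUnit_iff.2 (hunit j)).unit, Matrix.ext fun i j => ?_⟩
  rw [signedIncidence_apply]
  split_ifs with h
  · rw [← h]; rfl
  · exact (hzero j i (Ne.symm h)).symm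

theorem mkrMem_signedIncidence_iff {f : Fin k → Fin r} {s : Fin k → ℤˣ} :
    MkrMem (signedIncidence f s) ↔
      IsRestrictedGrowth f ∧ ∀ j, IsFirstOccurrence f j → s j = 1 := by
  constructor
  · rintro ⟨-, -, js, hmono, -, hjs⟩
    have hf_js : ∀ i, f (js i) = i := fun i =>
      signedIncidence_ne_zero_iff.1 (by rw [(hjs i).1]; exact one_ne_zero)
    have hjs_le : ∀ j, js (f j) ≤ j := fun j =>
      not_lt.1 fun h => signedIncidence_ne_zero_iff.2 rfl ((hjs (f j)).2 j h)
    refine ⟨⟨fun i => ⟨js i, hf_js i⟩,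
      fun j i hi => ⟨js i, (hmono hi).trans_le (hjs_le j), hf_js i⟩⟩, fun j hj => ?_⟩
    have hjs_eq : js (f j) = j := le_antisymm (hjs_le j) (not_lt.1 fun h => hj _ h (hf_js _))
    have h1 := (hjs (f j)).1
    rw [hjs_eq, signedIncidence_apply, if_pos rfl] at h1
    exact Units.ext h1
  · rintro ⟨hf, hs⟩
    have hfirst : ∀ i, ∃ j, f j = i ∧ IsFirstOccurrence f j := fun i => by
      obtain ⟨j, rfl⟩ := hf.1 i
      exact exists_isFirstOccurrence f j
    choose js hf_js hjs_first using hfirst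
    have hjs_le : ∀ i j, f j = i → js i ≤ j := fun i j h =>
      not_lt.1 fun hlt => hjs_first i j hlt (h.trans (hf_js i).symm)
    refine ⟨fun j => ⟨f j, ?_, fun i hi => ?_⟩,
      fun i => ⟨js i, signedIncidence_ne_zero_iff.2 (hf_js i)⟩, js,
      fun i₁ i₂ h => hf.lt_of_isFirstOccurrence (hjs_first i₁) (by rwa [hf_js, hf_js]),
      fun i hi => ?_, fun i => ⟨?_, fun j hj => ?_⟩⟩
    · rw [signedIncidence_apply, if_pos rfl]
      exact Int.isUnit_iff.1 (s j).isUnit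
    · rw [signedIncidence_apply, if_neg (Ne.symm hi)]
    · exact Nat.le_zero.1 (hjs_le i ⟨0, (js i).pos⟩ (hf.apply_eq_of_val_eq_zero rfl hi))
    · rw [signedIncidence_apply, if_pos (hf_js i), hs _ (hjs_first i), Units.val_one]
    · rw [signedIncidence_apply, if_neg fun h => hjs_first i j hj (h.trans (hf_js i).symm)]

theorem Fin.exists_lt_castSucc_iff {n : ℕ} {j : Fin n} {p : Fin (n + 1) → Prop} :
    (∃ j' < j.castSucc, p j') ↔ ∃ j' < j, p j'.castSucc := by
  constructor
  · rintro ⟨j', hj', hp⟩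
    obtain ⟨j'', rfl⟩ := Fin.exists_castSucc_eq.2 (Fin.ne_last_of_lt hj')
    exact ⟨j'', Fin.castSucc_lt_castSucc_iff.1 hj', hp⟩
  · rintro ⟨j', hj', hp⟩
    exact ⟨j'.castSucc, Fin.castSucc_lt_castSucc_iff.2 hj', hp⟩

namespace IsRestrictedGrowth

variable {g : Fin k → Fin r} {f : Fin (k + 1) → Fin (r + 1)}

theorem snoc (hg : IsRestrictedGrowth g) (v : Fin r) :
    IsRestrictedGrowth (Fin.snoc g v : Fin (k + 1) → Fin r) := by
  refine ⟨fun i => ?_, fun j => ?_⟩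
  · obtain ⟨j, rfl⟩ := hg.1 i
    exact ⟨j.castSucc, Fin.snoc_castSucc ..⟩
  · induction j using Fin.lastCases with
    | last =>
      intro i _
      obtain ⟨j, rfl⟩ := hg.1 i
      exact ⟨j.castSucc, Fin.castSucc_lt_last j, Fin.snoc_castSucc ..⟩
    | cast j =>
      intro i hi
      rw [Fin.snoc_castSucc] at hi
      simpa only [Fin.exists_lt_castSucc_iff, Fin.snoc_castSucc] using hg.2 j i hi

theorem snoc_castSucc_last (hg : IsRestrictedGrowth g) :
    IsRestrictedGrowth
      (Fin.snoc (Fin.castSucc ∘ g) (Fin.last r) : Fin (k + 1) → Fin (r + 1)) := by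
  refine ⟨fun i => ?_, fun j => ?_⟩
  · induction i using Fin.lastCases with
    | last => exact ⟨Fin.last k, Fin.snoc_last ..⟩
    | cast i =>
      obtain ⟨j, rfl⟩ := hg.1 i
      exact ⟨j.castSucc, Fin.snoc_castSucc ..⟩
  · intro i hi
    obtain ⟨i, rfl⟩ := Fin.exists_castSucc_eq.2 (Fin.ne_last_of_lt hi)
    induction j using Fin.lastCases with
    | last =>
      obtain ⟨j, rfl⟩ := hg.1 i
      exact ⟨j.castSucc, Fin.castSucc_lt_last j, Fin.snoc_castSucc ..⟩
    | cast j =>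
      rw [Fin.snoc_castSucc, comp_apply, Fin.castSucc_lt_castSucc_iff] at hi
      obtain ⟨j', hj', rfl⟩ := hg.2 j i hi
      exact ⟨j'.castSucc, Fin.castSucc_lt_castSucc_iff.2 hj', Fin.snoc_castSucc ..⟩

theorem init (hf : IsRestrictedGrowth f) (h : Surjective (Fin.init f)) :
    IsRestrictedGrowth (Fin.init f) :=
  ⟨h, fun j i hi => Fin.exists_lt_castSucc_iff.1 (hf.2 j.castSucc i hi)⟩

theorem apply_last_of_not_surjective_init (hf : IsRestrictedGrowth f)
    (h : ¬ Surjective (Fin.init f)) :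
    f (Fin.last k) = Fin.last r ∧ ∀ j, Fin.init f j ≠ Fin.last r := by
  obtain ⟨i₀, hi₀⟩ := not_forall.1 h
  have hmiss : ∀ j, f (Fin.castSucc j) ≠ i₀ := fun j hj => hi₀ ⟨j, hj⟩
  have hlast : f (Fin.last k) = i₀ := by
    obtain ⟨j, hj⟩ := hf.1 i₀
    induction j using Fin.lastCases with
    | last => exact hj
    | cast j => exact absurd hj (hmiss j)
  suffices i₀ = Fin.last r by subst this; exact ⟨hlast, hmiss⟩
  by_contra hne
  -- `Fin.last r` occurs before the last column, and the growth condition there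
  -- would make `i₀` occur even earlier
  obtain ⟨j, hj⟩ := hf.1 (Fin.last r)
  induction j using Fin.lastCases with
  | last => exact hne (hlast.symm.trans hj)
  | cast j =>
    obtain ⟨j', -, hj'⟩ :=
      Fin.exists_lt_castSucc_iff.1 (hf.2 j.castSucc i₀ (hj ▸ Fin.lt_last_iff_ne_last.2 hne))
    exact hmiss j' hj'

theorem castPred_init (hf : IsRestrictedGrowth f) (hlast : f (Fin.last k) = Fin.last r)
    (h : ∀ j, Fin.init f j ≠ Fin.last r) :
    IsRestrictedGrowth fun j => (Fin.init f j).castPred (h j) := by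
  refine ⟨fun i => ?_, fun j i hi => ?_⟩
  · obtain ⟨j, hj⟩ := hf.1 i.castSucc
    induction j using Fin.lastCases with
    | last => exact absurd (hlast.symm.trans hj) (Fin.castSucc_lt_last i).ne'
    | cast j => exact ⟨j, (Fin.castPred_eq_iff_eq_castSucc ..).2 hj⟩
  · rw [Fin.lt_castPred_iff] at hi
    obtain ⟨j', hj', hfj'⟩ := Fin.exists_lt_castSucc_iff.1 (hf.2 j.castSucc _ hi)
    exact ⟨j', hj', (Fin.castPred_eq_iff_eq_castSucc ..).2 hfj'⟩

end IsRestrictedGrowth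

def restrictedGrowthJoinEquiv (k r : ℕ) :
    {f : RestrictedGrowth (k + 1) (r + 1) // Surjective (Fin.init f.1)} ≃
      Fin (r + 1) × RestrictedGrowth k (r + 1) where
  toFun f := (f.1.1 (Fin.last k), ⟨Fin.init f.1.1, f.1.2.init f.2⟩)
  invFun p := ⟨⟨Fin.snoc p.2.1 p.1, p.2.2.snoc p.1⟩, by rw [Fin.init_snoc]; exact p.2.2.1⟩
  left_inv f := Subtype.ext (Subtype.ext (Fin.snoc_init_self _))
  right_inv _ := Prod.ext (by simp) (Subtype.ext (by simp))

def restrictedGrowthNewBlockEquiv (k r : ℕ) :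
    {f : RestrictedGrowth (k + 1) (r + 1) // ¬ Surjective (Fin.init f.1)} ≃
      RestrictedGrowth k r where
  toFun f :=
    have hf := f.1.2.apply_last_of_not_surjective_init f.2
    ⟨_, f.1.2.castPred_init hf.1 hf.2⟩
  invFun g := ⟨⟨_, g.2.snoc_castSucc_last⟩, fun h => by
    obtain ⟨j, hj⟩ := h (Fin.last r)
    rw [Fin.init_snoc] at hj
    exact (Fin.castSucc_lt_last _).ne hj⟩
  left_inv f := by
    have hf := f.1.2.apply_last_of_not_surjective_init f.2
    refine Subtype.ext (Subtype.ext (funext fun j => ?_))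
    induction j using Fin.lastCases with
    | last => simp [hf.1]
    | cast j => simp [Fin.init]
  right_inv g := Subtype.ext (funext fun j => by simp)

def restrictedGrowthSuccEquiv (k r : ℕ) :
    RestrictedGrowth (k + 1) (r + 1) ≃
      Fin (r + 1) × RestrictedGrowth k (r + 1) ⊕ RestrictedGrowth k r :=
  (Equiv.sumCompl fun f : RestrictedGrowth (k + 1) (r + 1) => Surjective (Fin.init f.1)).symm.trans
    ((restrictedGrowthJoinEquiv k r).sumCongr (restrictedGrowthNewBlockEquiv k r))

theorem card_restrictedGrowth : ∀ k r, Nat.card (RestrictedGrowth k r) = Stir k r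
  | 0, 0 => Nat.card_eq_one_iff_unique.2
      ⟨inferInstance, ⟨⟨finZeroElim, fun i => i.elim0, fun j => j.elim0⟩⟩⟩
  | 0, r + 1 => Nat.card_eq_zero.2 (Or.inl ⟨fun f => (f.2.1 0).elim fun j _ => j.elim0⟩)
  | k + 1, 0 => Nat.card_eq_zero.2 (Or.inl ⟨fun f => (f.1 0).elim0⟩)
  | k + 1, r + 1 => by
    rw [Nat.card_congr (restrictedGrowthSuccEquiv k r), Nat.card_sum, Nat.card_prod, Nat.card_fin,
      card_restrictedGrowth k (r + 1), card_restrictedGrowth k r, Stir]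

noncomputable def signedIncidenceEquiv (k r : ℕ) :
    (Σ f : RestrictedGrowth k r, SignChoice f.1) ≃
      {D : Matrix (Fin r) (Fin k) ℤ // MkrMem D} :=
  Equiv.ofBijective
    (fun x => ⟨signedIncidence x.1.1 x.2.1, mkrMem_signedIncidence_iff.2 ⟨x.1.2, x.2.2⟩⟩)
    ⟨fun ⟨⟨f, _⟩, s, _⟩ ⟨⟨f', _⟩, s', _⟩ h => by
      obtain ⟨rfl, rfl⟩ := signedIncidence_inj.1 (congrArg Subtype.val h)
      rfl,
    fun ⟨D, hD⟩ => by
      obtain ⟨f, s, rfl⟩ := exists_signedIncidence_eq hD.1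
      obtain ⟨hf, hs⟩ := mkrMem_signedIncidence_iff.1 hD
      exact ⟨⟨⟨f, hf⟩, s, hs⟩, rfl⟩⟩

theorem card_Mkr_general (r k : ℕ) :
    Nat.card {D : Matrix (Fin r) (Fin k) ℤ // MkrMem D} = 2 ^ (k - r) * Stir k r := by
  classical
  rw [← Nat.card_congr (signedIncidenceEquiv k r), Nat.card_sigma,
    Finset.sum_congr rfl fun f _ => card_signChoice f.2.1, Finset.sum_const, Finset.card_univ,
    ← Nat.card_eq_fintype_card, card_restrictedGrowth, smul_eq_mul, mul_comm]

/-- #M^k_r = 2^(k-r) · S(k,r). -/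
theorem card_Mkr (r k : ℕ) (hr : 1 ≤ r) (hrk : r ≤ k) :
    Nat.card {D : Matrix (Fin r) (Fin k) ℤ // MkrMem D} = 2 ^ (k - r) * Stir k r :=
  card_Mkr_general r k
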